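/- arXiv:math/0702398 — 7 statements merged into one kernel-verified Lean document; each statement's English description precedes it below -/
import Mathlib

section
/- Let R be a (not necessarily commutative) ring with 1, let q be a central invertible element of R, let a be a natural number, and let x, y ∈ R with x invertible and x·y = q^{2a}·y·x. Then x^{−1} · ∏_{b=1}^{a} (1 + q^{2b−1} y) = (∏_{b=1}^{a} (1 + q^{−(2b−1)} y)) · x^{−1}. (The factors 1 + q^{±(2b−1)}y pairwise commute, so the products are unambiguous.) -/
/-!
Conjugation by `x⁻¹` turns `q^{2a} y` into `y`. Since `2b + 1 = 2a - (2(a-1-b) + 1)`, the factor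
`1 + q^{2b+1} y` equals `1 + q^{-(2(a-1-b)+1)} (q^{2a} y)`, which `x⁻¹` therefore moves past as
`1 + q^{-(2(a-1-b)+1)} y`. The resulting product is the right-hand one in reverse order, and the
order is irrelevant because all factors are of the form `1 + c y` with `c` central.
-/

theorem SemiconjBy.list_prod_map {M ι : Type*} [Monoid M] {a : M} {f g : ι → M}
    (h : ∀ i, SemiconjBy a (f i) (g i)) (l : List ι) :
    SemiconjBy a (l.map f).prod (l.map g).prod := by
  induction l with
  | nil => exact SemiconjBy.one_right a
  | cons i l ih => exact (h i).mul_right ih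

theorem List.prod_map_range_reflect {M : Type*} [Monoid M] (f : ℕ → M)
    (hf : ∀ i j, Commute (f i) (f j)) (n : ℕ) :
    ((List.range n).map fun b => f (n - 1 - b)).prod = ((List.range n).map f).prod := by
  have hrev : (List.range n).map (fun b => f (n - 1 - b)) = ((List.range n).map f).reverse := by
    rw [← List.map_reverse, List.range_eq_range', List.reverse_range', List.map_map,
      ← List.range_eq_range']
    simp [Function.comp_def]
  rw [hrev]
  exact ((List.reverse_perm _).symm.prod_eq' <|
    List.pairwise_map.mpr (List.pairwise_of_forall fun i j => hf i j)).symm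

theorem commute_one_add_mul_of_commute {R : Type*} [Ring R] {c d y : R} (hc : ∀ r, Commute c r)
    (hd : ∀ r, Commute d r) : Commute (1 + c * y) (1 + d * y) :=
  (Commute.one_left _).add_left <| (Commute.one_right _).add_right <|
    (hc (d * y)).mul_left ((hd y).symm.mul_right (Commute.refl y))

theorem Units.inv_pow_mul_pow_add {M : Type*} [Monoid M] (u : Mˣ) (m n : ℕ) :
    (↑u⁻¹ : M) ^ m * (u : M) ^ (m + n) = (u : M) ^ n := by
  rw [pow_add, ← mul_assoc, ← Units.val_pow_eq_pow_val, ← Units.val_pow_eq_pow_val,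
    ← Units.val_mul, inv_pow, inv_mul_cancel, Units.val_one, one_mul]

theorem stmt5 {R : Type*} [Ring R] (q x : Rˣ)
    (hq : ∀ r : R, (q : R) * r = r * (q : R))
    (a : ℕ) (y : R)
    (hxy : (x : R) * y = (q : R) ^ (2 * a) * (y * (x : R))) :
    (↑x⁻¹ : R) * ((List.range a).map (fun b => 1 + (q : R) ^ (2 * b + 1) * y)).prod
      = ((List.range a).map (fun b => 1 + (↑(q⁻¹) : R) ^ (2 * b + 1) * y)).prod * (↑x⁻¹ : R) := by
  have hcentral : ∀ m : ℕ, ∀ r : R, Commute ((↑q⁻¹ : R) ^ m) r := fun m r =>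
    (Commute.units_inv_left (hq r)).pow_left m
  have hconj : SemiconjBy (↑x⁻¹ : R) ((q : R) ^ (2 * a) * y) y := by
    apply SemiconjBy.units_inv_symm_left
    rw [SemiconjBy, hxy, mul_assoc]
  have hfactor : ∀ b ∈ List.range a, 1 + (q : R) ^ (2 * b + 1) * y
      = 1 + (↑q⁻¹ : R) ^ (2 * (a - 1 - b) + 1) * ((q : R) ^ (2 * a) * y) := by
    intro b hb
    have h2a : 2 * a = (2 * (a - 1 - b) + 1) + (2 * b + 1) := by
      have := List.mem_range.mp hb
      omega
    rw [← mul_assoc, h2a, Units.inv_pow_mul_pow_add]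
  rw [List.map_congr_left hfactor, (SemiconjBy.list_prod_map (fun b =>
      (SemiconjBy.one_right _).add_right (SemiconjBy.mul_right (hcentral _ _).symm hconj)) _).eq]
  congr 1
  exact List.prod_map_range_reflect (fun b => 1 + (↑q⁻¹ : R) ^ (2 * b + 1) * y)
    (fun i j => commute_one_add_mul_of_commute (hcentral _) (hcentral _)) a
end

section
/- Let λ be a nonzero real number, f : ℝ → ℂ a continuous function, F : ℝ → ℂ a differentiable function with F' = f, and g : ℝ → ℂ a differentiable function. Define u : ℝ × ℝ → ℂ by u(s,t) := g(t − λs)·exp((F(t) − F(t − λs))/λ). Then u(0,t) = g(t) for all t, and for all (s,t): ∂u/∂s(s,t) = −λ·∂u/∂t(s,t) + f(t)·u(s,t). -/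
theorem stmt8 (l : ℝ) (hl : l ≠ 0) (f F g : ℝ → ℂ)
    (hf : Continuous f) (hF : ∀ t, HasDerivAt F (f t) t) (hg : Differentiable ℝ g)
    (u : ℝ → ℝ → ℂ)
    (hu : ∀ s t, u s t = g (t - l * s) * Complex.exp ((F t - F (t - l * s)) / (l : ℂ))) :
    (∀ t, u 0 t = g t) ∧
    (∀ s t, deriv (fun s' => u s' t) s
        = -(l : ℂ) * deriv (fun t' => u s t') t + f t * u s t) := by
  have hlc : (l : ℂ) ≠ 0 := by exact_mod_cast hl
  constructor
  · intro t; simp [hu]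
  · intro s t
    set x := t - l * s with hx
    set E : ℂ := Complex.exp ((F t - F x) / (l : ℂ)) with hE
    have hgx := (hg x).hasDerivAt
    -- derivative in s
    have hts : HasDerivAt (fun s' : ℝ => t - l * s') (-l) s := by
      simpa [Pi.sub_def] using ((hasDerivAt_const s t).sub ((hasDerivAt_id s).const_mul l))
    have hg1 : HasDerivAt (fun s' => g (t - l * s')) ((-l : ℝ) • deriv g x) s := by
      simpa [Function.comp_def] using (HasDerivAt.scomp s hgx hts)
    have hinner1 : HasDerivAt (fun s' => (F t - F (t - l * s')) / (l : ℂ))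
        ((0 - (-l : ℝ) • f x) / (l : ℂ)) s := by
      simpa [Function.comp] using ((hasDerivAt_const s (F t)).sub (HasDerivAt.scomp s (hF x) hts)).div_const (l:ℂ)
    have hexp1 : HasDerivAt (fun s' => Complex.exp ((F t - F (t - l * s')) / (l : ℂ)))
        (E * ((0 - (-l : ℝ) • f x) / (l : ℂ))) s := by
      simpa [hE] using hinner1.cexp
    have h1 : HasDerivAt (fun s' => u s' t)
        ((-l : ℝ) • deriv g x * E + g x * (E * ((0 - (-l : ℝ) • f x) / (l : ℂ)))) s := by
      have := hg1.mul hexp1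
      simp only [hu]
      simpa [hE, hx, Pi.mul_def] using this
    -- derivative in t
    have htt : HasDerivAt (fun t' : ℝ => t' - l * s) (1 : ℝ) t := by
      simpa [Pi.sub_def] using ((hasDerivAt_id t).sub (hasDerivAt_const t (l * s)))
    have hg2 : HasDerivAt (fun t' => g (t' - l * s)) ((1 : ℝ) • deriv g x) t := by
      simpa [Function.comp_def] using (HasDerivAt.scomp t hgx htt)
    have hinner2 : HasDerivAt (fun t' => (F t' - F (t' - l * s)) / (l : ℂ))
        ((f t - (1 : ℝ) • f x) / (l : ℂ)) t := by
      simpa [Function.comp] using ((hF t).sub (HasDerivAt.scomp t (hF x) htt)).div_const (l:ℂ)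
    have hexp2 : HasDerivAt (fun t' => Complex.exp ((F t' - F (t' - l * s)) / (l : ℂ)))
        (E * ((f t - (1 : ℝ) • f x) / (l : ℂ))) t := by
      simpa [hE] using hinner2.cexp
    have h2 : HasDerivAt (fun t' => u s t')
        ((1 : ℝ) • deriv g x * E + g x * (E * ((f t - (1 : ℝ) • f x) / (l : ℂ)))) t := by
      have := hg2.mul hexp2
      simp only [hu]
      simpa [hE, hx, Pi.mul_def] using this
    rw [h1.deriv, h2.deriv, hu]
    rw [← hx, ← hE]
    simp only [Complex.real_smul, Complex.ofReal_neg, Complex.ofReal_one]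
    field_simp
    ring
end

section
/- For every real z, the quantum logarithm satisfies lim_{ℏ → 0+} φ^ℏ(z) = log(e^z + 1). -/
noncomputable section

open Complex

/-- The shifted contour point `t + iδ(ℏ)`, where `δ(ℏ) := min(1, 1/ℏ)/2`
satisfies `0 < δ < min(1, 1/ℏ)` for `ℏ > 0`. -/
def qContour (ℏ t : ℝ) : ℂ := (t : ℂ) + Complex.I * ((min 1 ℏ⁻¹ / 2 : ℝ) : ℂ)

/-- The quantum logarithm
`φ^ℏ(z) = −2πℏ ∫_ℝ e^{−i(t+iδ)z} / ((e^{π(t+iδ)} − e^{−π(t+iδ)})(e^{πℏ(t+iδ)} − e^{−πℏ(t+iδ)})) dt`. -/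
def qlog (ℏ : ℝ) (z : ℂ) : ℂ :=
  (-(2 * Real.pi * ℏ) : ℝ) *
    ∫ t : ℝ,
      Complex.exp (-Complex.I * qContour ℏ t * z) /
        ((Complex.exp ((Real.pi : ℂ) * qContour ℏ t)
            - Complex.exp (-((Real.pi : ℂ) * qContour ℏ t))) *
         (Complex.exp ((Real.pi : ℂ) * (ℏ : ℂ) * qContour ℏ t)
            - Complex.exp (-((Real.pi : ℂ) * (ℏ : ℂ) * qContour ℏ t))))

open MeasureTheory Filter Set

namespace QLogAux

/-- The fixed contour point for `ℏ ≤ 1`. -/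
def wc (t : ℝ) : ℂ := (t : ℂ) + Complex.I / 2

lemma wc_ne (t : ℝ) : wc t ≠ 0 := by
  intro h
  have : (wc t).im = 0 := by rw [h]; simp
  simp [wc] at this

lemma wc_im (t : ℝ) : (wc t).im = 1/2 := by simp [wc]

lemma wc_norm_ge (t : ℝ) : (1:ℝ)/2 ≤ ‖wc t‖ := by
  have := Complex.abs_im_le_norm (wc t)
  rw [wc_im] at this
  simpa using le_trans (le_abs_self _) this

/-- The first denominator factor. -/
def A (t : ℝ) : ℂ :=
  Complex.exp ((Real.pi : ℂ) * wc t) - Complex.exp (-((Real.pi : ℂ) * wc t))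

lemma A_eq (t : ℝ) : A t = 2 * Complex.I * Complex.cosh ((Real.pi * t : ℝ) : ℂ) := by
  have h1 : (Real.pi : ℂ) * wc t = ((Real.pi * t : ℝ) : ℂ) + ((Real.pi/2 : ℝ) : ℂ) * Complex.I := by
    simp only [wc]; push_cast; ring
  rw [A, h1, neg_add, Complex.exp_add, Complex.exp_add, ← neg_mul, Complex.exp_mul_I,
    Complex.exp_mul_I, Complex.cosh]
  simp only [← Complex.ofReal_neg, ← Complex.ofReal_cos, ← Complex.ofReal_sin,
    Real.cos_pi_div_two, Real.sin_pi_div_two, Real.cos_neg, Real.sin_neg]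
  push_cast
  ring

lemma A_norm (t : ℝ) : ‖A t‖ = 2 * Real.cosh (Real.pi * t) := by
  rw [A_eq, ← Complex.ofReal_cosh, norm_mul, norm_mul, Complex.norm_two, Complex.norm_I,
    Complex.norm_real, Real.norm_eq_abs, abs_of_pos (Real.cosh_pos _)]
  ring

/-- The limiting integrand. -/
def g0 (z : ℝ) (t : ℝ) : ℂ :=
  Complex.exp (-Complex.I * wc t * (z : ℂ)) / A t * (-(wc t)⁻¹)

lemma two_sinh (x : ℂ) : Complex.exp x - Complex.exp (-x) = 2 * Complex.sinh x := by
  rw [Complex.sinh]; ring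

lemma sinh_norm_ge (a b : ℝ) :
    Real.cosh a * Real.sin b ≤ ‖Complex.sinh ((a : ℂ) + (b : ℂ) * Complex.I)‖ := by
  have h : Complex.sinh ((a : ℂ) + (b : ℂ) * Complex.I)
      = ((Real.sinh a * Real.cos b : ℝ) : ℂ) + ((Real.cosh a * Real.sin b : ℝ) : ℂ) * Complex.I := by
    rw [Complex.sinh_add, Complex.sinh_mul_I, Complex.cosh_mul_I,
      ← Complex.ofReal_cos, ← Complex.ofReal_sin, ← Complex.ofReal_sinh, ← Complex.ofReal_cosh]
    push_cast; ring
  have him : (Complex.sinh ((a : ℂ) + (b : ℂ) * Complex.I)).im = Real.cosh a * Real.sin b := by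
    rw [h]; simp [Complex.sin_ofReal_re, Complex.cos_ofReal_re]
  calc Real.cosh a * Real.sin b ≤ |(Complex.sinh ((a : ℂ) + (b : ℂ) * Complex.I)).im| := by
        rw [him]; exact le_abs_self _
    _ ≤ ‖Complex.sinh ((a : ℂ) + (b : ℂ) * Complex.I)‖ := by
        exact Complex.abs_im_le_norm _

lemma integrable_inv_cosh : Integrable (fun t : ℝ => (Real.cosh (Real.pi * t))⁻¹) := by
  have hmeas : AEStronglyMeasurable (fun t : ℝ => (Real.cosh (Real.pi * t))⁻¹) volume :=
    (((Real.continuous_cosh.comp (continuous_const.mul continuous_id)).inv₀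
      (fun t => (Real.cosh_pos _).ne')).aestronglyMeasurable)
  have key : ∀ t : ℝ, |t| ≤ Real.pi * |t| := fun t => by
    nlinarith [abs_nonneg t, Real.pi_gt_three]
  have hcosh : ∀ t : ℝ, Real.exp |t| / 2 ≤ Real.cosh (Real.pi * t) := by
    intro t
    have h1 : Real.cosh (Real.pi * t) = Real.cosh (Real.pi * |t|) := by
      rcases abs_cases t with ⟨h, _⟩ | ⟨h, _⟩ <;> rw [h] <;> simp [Real.cosh_neg, mul_neg]
    rw [h1, Real.cosh_eq]
    have := Real.exp_le_exp.mpr (key t)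
    nlinarith [Real.exp_pos (-(Real.pi * |t|))]
  have hb : ∀ t : ℝ, ‖(Real.cosh (Real.pi * t))⁻¹‖ ≤ 2 * Real.exp (-|t|) := by
    intro t
    rw [Real.norm_eq_abs, abs_of_pos (inv_pos.mpr (Real.cosh_pos _))]
    have h2 : (0:ℝ) < Real.exp |t| / 2 := by positivity
    calc (Real.cosh (Real.pi * t))⁻¹ ≤ (Real.exp |t| / 2)⁻¹ := inv_anti₀ h2 (hcosh t)
      _ = 2 * Real.exp (-|t|) := by rw [Real.exp_neg]; field_simp
  have hint : Integrable (fun t : ℝ => 2 * Real.exp (-|t|)) := by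
    have h1 : IntegrableOn (fun t : ℝ => 2 * Real.exp (-|t|)) (Ioi 0) := by
      apply MeasureTheory.IntegrableOn.congr_fun
        ((exp_neg_integrableOn_Ioi 0 one_pos).const_mul 2) ?_ measurableSet_Ioi
      intro t ht
      simp [abs_of_pos (mem_Ioi.mp ht)]
    have h2 : IntegrableOn (fun t : ℝ => 2 * Real.exp (-|t|)) (Iic 0) := by
      apply MeasureTheory.IntegrableOn.congr_fun
        ((integrableOn_exp_Iic 0).const_mul 2) ?_ measurableSet_Iic
      intro t ht
      simp [abs_of_nonpos (mem_Iic.mp ht)]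
    have := h2.union h1
    rwa [Iic_union_Ioi, integrableOn_univ] at this
  exact hint.mono' hmeas (Filter.Eventually.of_forall hb)


def Fi (ℏ z : ℝ) (t : ℝ) : ℂ :=
  ((-(2 * Real.pi * ℏ) : ℝ) : ℂ) *
    (Complex.exp (-Complex.I * qContour ℏ t * (z : ℂ)) /
      ((Complex.exp ((Real.pi : ℂ) * qContour ℏ t)
          - Complex.exp (-((Real.pi : ℂ) * qContour ℏ t))) *
       (Complex.exp ((Real.pi : ℂ) * (ℏ : ℂ) * qContour ℏ t)
          - Complex.exp (-((Real.pi : ℂ) * (ℏ : ℂ) * qContour ℏ t)))))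

lemma qContour_eq {ℏ : ℝ} (h : ℏ ∈ Ioo (0:ℝ) 1) (t : ℝ) : qContour ℏ t = wc t := by
  have h1 : (1:ℝ) ≤ ℏ⁻¹ := by
    rw [← one_div, le_div_iff₀ h.1]
    linarith [h.2]
  rw [qContour, wc, min_eq_left h1]
  push_cast
  ring

lemma Fi_eq {ℏ : ℝ} (h : ℏ ∈ Ioo (0:ℝ) 1) (z t : ℝ) :
    Fi ℏ z t = (Complex.exp (-Complex.I * wc t * (z : ℂ)) / A t) *
      (((-(2 * Real.pi * ℏ) : ℝ) : ℂ) / (2 * Complex.sinh ((Real.pi : ℂ) * (ℏ : ℂ) * wc t))) := by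
  rw [Fi, qContour_eq h, A, ← Complex.two_sinh ((Real.pi : ℂ) * (ℏ : ℂ) * wc t),
    div_mul_div_comm, mul_div_assoc', mul_comm]

lemma Blim {v : ℂ} (hv : v ≠ 0) :
    Tendsto (fun ℏ : ℝ => ((-(2 * Real.pi * ℏ) : ℝ) : ℂ) /
        (2 * Complex.sinh ((Real.pi : ℂ) * (ℏ : ℂ) * v)))
      (nhdsWithin 0 (Ioi 0)) (nhds (-v⁻¹)) := by
  have T1 : Tendsto (fun x : ℂ => Complex.sinh x / x) (nhdsWithin 0 {0}ᶜ) (nhds 1) := by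
    have h := hasDerivAt_iff_tendsto_slope.mp (Complex.hasDerivAt_sinh 0)
    rw [Complex.cosh_zero] at h
    exact h.congr (fun x => by simp [slope_def_field])
  have T2 : Tendsto (fun x : ℂ => x / Complex.sinh x) (nhdsWithin 0 {0}ᶜ) (nhds 1) := by
    have := T1.inv₀ one_ne_zero
    rw [inv_one] at this
    exact this.congr (fun x => by rw [inv_div])
  have hu : Tendsto (fun ℏ : ℝ => (Real.pi : ℂ) * (ℏ : ℂ) * v)
      (nhdsWithin 0 (Ioi 0)) (nhdsWithin 0 {0}ᶜ) := by
    apply tendsto_nhdsWithin_of_tendsto_nhds_of_eventually_within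
    · have h0 : Tendsto (fun ℏ : ℝ => (ℏ : ℂ)) (nhdsWithin 0 (Ioi 0)) (nhds 0) := by
        have := (Complex.continuous_ofReal.tendsto 0).mono_left
          (nhdsWithin_le_nhds (s := Ioi (0:ℝ)))
        simpa using this
      have := (h0.const_mul ((Real.pi : ℂ))).mul_const v
      simpa using this
    · filter_upwards [self_mem_nhdsWithin] with ℏ hℏ
      simp only [mem_compl_iff, mem_singleton_iff]
      exact mul_ne_zero (mul_ne_zero (by exact_mod_cast Real.pi_ne_zero)
        (by exact_mod_cast (ne_of_gt (mem_Ioi.mp hℏ)))) hv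
  have hid : ∀ ℏ : ℝ, ((-(2 * Real.pi * ℏ) : ℝ) : ℂ) /
      (2 * Complex.sinh ((Real.pi : ℂ) * (ℏ : ℂ) * v))
      = -v⁻¹ * (((Real.pi : ℂ) * (ℏ : ℂ) * v) / Complex.sinh ((Real.pi : ℂ) * (ℏ : ℂ) * v)) := by
    intro ℏ
    set s := Complex.sinh ((Real.pi : ℂ) * (ℏ : ℂ) * v)
    rw [div_eq_mul_inv, div_eq_mul_inv, mul_inv]
    push_cast
    linear_combination (Real.pi : ℂ) * (ℏ : ℂ) * s⁻¹ * (inv_mul_cancel₀ hv)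
  have := tendsto_const_nhds (x := -v⁻¹) (f := nhdsWithin (0:ℝ) (Ioi 0)) |>.mul (T2.comp hu)
  rw [mul_one] at this
  exact this.congr (fun ℏ => (hid ℏ).symm)

lemma tendsto_Fi (z t : ℝ) :
    Tendsto (fun ℏ : ℝ => Fi ℏ z t) (nhdsWithin 0 (Ioi 0)) (nhds (g0 z t)) := by
  have hlim : Tendsto (fun ℏ : ℝ => (Complex.exp (-Complex.I * wc t * (z : ℂ)) / A t) *
      (((-(2 * Real.pi * ℏ) : ℝ) : ℂ) / (2 * Complex.sinh ((Real.pi : ℂ) * (ℏ : ℂ) * wc t))))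
      (nhdsWithin 0 (Ioi 0)) (nhds (g0 z t)) :=
    tendsto_const_nhds.mul (Blim (wc_ne t))
  apply hlim.congr'
  filter_upwards [Ioo_mem_nhdsGT one_pos] with ℏ hℏ
  exact (Fi_eq hℏ z t).symm

lemma exp_norm (z t : ℝ) : ‖Complex.exp (-Complex.I * wc t * (z : ℂ))‖ = Real.exp (z/2) := by
  have h : -Complex.I * wc t * (z : ℂ) = ((z/2 : ℝ) : ℂ) + ((-(t*z) : ℝ) : ℂ) * Complex.I := by
    rw [wc]; push_cast; ring_nf; rw [Complex.I_sq]; ring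
  rw [h, Complex.norm_exp]
  simp

lemma sinh_lower {ℏ : ℝ} (h : ℏ ∈ Ioo (0:ℝ) 1) (t : ℝ) :
    ℏ ≤ ‖Complex.sinh ((Real.pi : ℂ) * (ℏ : ℂ) * wc t)‖ := by
  have harg : (Real.pi : ℂ) * (ℏ : ℂ) * wc t
      = ((Real.pi * ℏ * t : ℝ) : ℂ) + ((Real.pi * ℏ / 2 : ℝ) : ℂ) * Complex.I := by
    rw [wc]; push_cast; ring
  rw [harg]
  refine le_trans ?_ (sinh_norm_ge _ _)
  have hsin : ℏ ≤ Real.sin (Real.pi * ℏ / 2) := by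
    have h1 : (0:ℝ) ≤ Real.pi * ℏ / 2 := by nlinarith [Real.pi_pos, h.1]
    have h2 : Real.pi * ℏ / 2 ≤ Real.pi / 2 := by
      have := Real.pi_pos
      nlinarith [h.2]
    have := Real.mul_le_sin h1 h2
    calc ℏ = 2 / Real.pi * (Real.pi * ℏ / 2) := by
          field_simp
      _ ≤ Real.sin (Real.pi * ℏ / 2) := this
  have hcosh := Real.one_le_cosh (Real.pi * ℏ * t)
  nlinarith [Real.sin_nonneg_of_nonneg_of_le_pi (by nlinarith [Real.pi_pos, h.1] : (0:ℝ) ≤ Real.pi * ℏ / 2)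
    (by nlinarith [Real.pi_pos, h.2] : Real.pi * ℏ / 2 ≤ Real.pi)]

lemma Fi_bound {ℏ : ℝ} (h : ℏ ∈ Ioo (0:ℝ) 1) (z t : ℝ) :
    ‖Fi ℏ z t‖ ≤ Real.pi * Real.exp (z/2) * (Real.cosh (Real.pi * t))⁻¹ := by
  rw [Fi_eq h, norm_mul, norm_div, norm_div, exp_norm, A_norm, norm_mul]
  have hc : ‖((-(2 * Real.pi * ℏ) : ℝ) : ℂ)‖ = 2 * Real.pi * ℏ := by
    rw [Complex.norm_real, Real.norm_eq_abs, abs_neg, abs_of_pos]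
    nlinarith [Real.pi_pos, h.1]
  have h2 : ‖(2:ℂ)‖ = 2 := by norm_num
  rw [hc, h2]
  have hS := sinh_lower h t
  have hC := Real.one_le_cosh (Real.pi * t)
  have hCpos : (0:ℝ) < Real.cosh (Real.pi * t) := Real.cosh_pos _
  have hE : (0:ℝ) < Real.exp (z/2) := Real.exp_pos _
  have hpi := Real.pi_pos
  have hfrac : 2 * Real.pi * ℏ / (2 * ‖Complex.sinh ((Real.pi : ℂ) * (ℏ : ℂ) * wc t)‖)
      ≤ Real.pi := by
    rw [div_le_iff₀ (by nlinarith [h.1])]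
    nlinarith [h.1]
  calc Real.exp (z/2) / (2 * Real.cosh (Real.pi * t)) *
        (2 * Real.pi * ℏ / (2 * ‖Complex.sinh ((Real.pi : ℂ) * (ℏ : ℂ) * wc t)‖))
      ≤ Real.exp (z/2) / (2 * Real.cosh (Real.pi * t)) * Real.pi := by
        apply mul_le_mul_of_nonneg_left hfrac (by positivity)
    _ ≤ Real.pi * Real.exp (z/2) * (Real.cosh (Real.pi * t))⁻¹ := by
        rw [div_mul_eq_mul_div, ← div_eq_mul_inv]
        rw [div_le_div_iff₀ (by positivity) hCpos]
        nlinarith [mul_pos (mul_pos hpi hE) hCpos]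

lemma Fi_meas (ℏ z : ℝ) : AEStronglyMeasurable (fun t => Fi ℏ z t) volume := by
  apply Measurable.aestronglyMeasurable
  have hq : Measurable (fun t : ℝ => qContour ℏ t) :=
    (Complex.measurable_ofReal).add_const _
  unfold Fi
  fun_prop

lemma cpow_of_pos {r : ℝ} (hr : 0 < r) (y : ℂ) :
    (r : ℂ) ^ y = Complex.exp (((Real.log r : ℝ) : ℂ) * y) := by
  rw [Complex.cpow_def_of_ne_zero (by exact_mod_cast hr.ne'), Complex.ofReal_log hr.le]

variable (z : ℝ)

def cc (z : ℝ) : ℂ := 1/2 - Complex.I * (z : ℂ) / (2 * (Real.pi : ℂ))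

lemma cc_re : (cc z).re = 1/2 := by
  simp [cc, Complex.div_re, Complex.normSq]

lemma one_sub_cc_re : (1 - cc z).re = 1/2 := by
  rw [Complex.sub_re, Complex.one_re, cc_re]; norm_num

def φm (t : ℝ) : ℝ := Real.exp (2 * Real.pi * t) / (1 + Real.exp (2 * Real.pi * t))

def φm' (t : ℝ) : ℝ :=
  2 * Real.pi * Real.exp (2 * Real.pi * t) / (1 + Real.exp (2 * Real.pi * t)) ^ 2

lemma φm_hasDeriv (t : ℝ) : HasDerivAt φm (φm' t) t := by
  have hE : HasDerivAt (fun t : ℝ => Real.exp (2 * Real.pi * t))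
      (Real.exp (2 * Real.pi * t) * (2 * Real.pi)) t := by
    have h1 : HasDerivAt (fun t : ℝ => 2 * Real.pi * t) (2 * Real.pi) t := by
      simpa using (hasDerivAt_id t).const_mul (2 * Real.pi)
    exact h1.exp
  have hden : (1 + Real.exp (2 * Real.pi * t)) ≠ 0 := by positivity
  have := hE.div ((hasDerivAt_const t (1:ℝ)).add hE) hden
  refine HasDerivAt.congr_deriv this ?_
  rw [φm']
  simp only [Pi.add_apply]
  field_simp
  ring

lemma φm_pos (t : ℝ) : 0 < φm t := by
  have := Real.exp_pos (2 * Real.pi * t); rw [φm]; positivity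

lemma φm_lt_one (t : ℝ) : φm t < 1 := by
  have h := Real.exp_pos (2 * Real.pi * t)
  rw [φm, div_lt_one (by positivity)]
  linarith

lemma φm_strictMono : StrictMono φm := by
  intro a b hab
  have ha := Real.exp_pos (2 * Real.pi * a)
  have hb := Real.exp_pos (2 * Real.pi * b)
  have hE : Real.exp (2 * Real.pi * a) < Real.exp (2 * Real.pi * b) :=
    Real.exp_lt_exp.mpr (by nlinarith [Real.pi_pos])
  rw [φm, φm, div_lt_div_iff₀ (by positivity) (by positivity)]
  nlinarith

lemma φm_image : φm '' univ = Ioo 0 1 := by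
  apply Subset.antisymm
  · rintro x ⟨t, -, rfl⟩
    exact ⟨φm_pos t, φm_lt_one t⟩
  · rintro y ⟨hy0, hy1⟩
    refine ⟨Real.log (y / (1 - y)) / (2 * Real.pi), mem_univ _, ?_⟩
    have h1y : 0 < 1 - y := by linarith
    have hq : 0 < y / (1 - y) := by positivity
    have hE : Real.exp (2 * Real.pi * (Real.log (y / (1 - y)) / (2 * Real.pi)))
        = y / (1 - y) := by
      rw [mul_div_cancel₀ _ (by positivity : (2 * Real.pi) ≠ 0), Real.exp_log hq]
    rw [φm, hE]
    field_simp
    ring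

lemma Kval :
    ∫ t : ℝ, Complex.exp (-(Complex.I * (t : ℂ) * (z : ℂ))) / ((Real.cosh (Real.pi * t) : ℝ) : ℂ)
      = (((Real.cosh (z/2) : ℝ) : ℂ))⁻¹ := by
  -- change of variables
  have hder : ∀ t ∈ (univ : Set ℝ), HasDerivWithinAt φm (φm' t) univ t :=
    fun t _ => (φm_hasDeriv t).hasDerivWithinAt
  have hinj : InjOn φm univ := φm_strictMono.injective.injOn
  have htrans := integral_image_eq_integral_abs_deriv_smul MeasurableSet.univ hder hinj
    (fun x : ℝ => (x : ℂ) ^ (cc z - 1) * ((1 : ℂ) - (x : ℂ)) ^ (-(cc z)))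
  rw [φm_image, Measure.restrict_univ] at htrans
  -- pointwise identity for the substituted integrand
  have hpt : ∀ t : ℝ, |φm' t| • ((φm t : ℂ) ^ (cc z - 1) * ((1:ℂ) - (φm t : ℂ)) ^ (-(cc z)))
      = (Real.pi : ℂ) * (Complex.exp (-(Complex.I * (t : ℂ) * (z : ℂ)))
          / ((Real.cosh (Real.pi * t) : ℝ) : ℂ)) := by
    intro t
    set E := Real.exp (2 * Real.pi * t) with hEdef
    have hE : 0 < E := Real.exp_pos _
    have h1E : 0 < 1 + E := by linarith
    have hφ : 0 < φm t := φm_pos t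
    have h1φ : 0 < 1 - φm t := by linarith [φm_lt_one t]
    have hgφ : ((1:ℂ) - (φm t : ℂ)) = ((1 - φm t : ℝ) : ℂ) := by push_cast; ring
    have hlogφ : Real.log (φm t) = 2 * Real.pi * t - Real.log (1 + E) := by
      rw [φm, Real.log_div hE.ne' h1E.ne', Real.log_exp]
    have hlog1φ : Real.log (1 - φm t) = -Real.log (1 + E) := by
      have : 1 - φm t = (1 + E)⁻¹ := by rw [φm]; field_simp; rw [hEdef]; ring
      rw [this, Real.log_inv]
    rw [hgφ, cpow_of_pos hφ, cpow_of_pos h1φ, hlogφ, hlog1φ, ← Complex.exp_add]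
    have hexparg : ((2 * Real.pi * t - Real.log (1 + E) : ℝ) : ℂ) * (cc z - 1)
        + ((-Real.log (1 + E) : ℝ) : ℂ) * (-(cc z))
        = ((Real.pi * t : ℝ) : ℂ) - Complex.I * (t : ℂ) * (z : ℂ)
          - ((2 * Real.pi * t : ℝ) : ℂ) + ((Real.log (1 + E) : ℝ) : ℂ) := by
      have hπ : ((Real.pi : ℝ) : ℂ) ≠ 0 := by exact_mod_cast Real.pi_ne_zero
      rw [cc]
      push_cast
      field_simp
      ring
    rw [hexparg]
    have hφ'pos : 0 < φm' t := by
      have := Real.exp_pos (2 * Real.pi * t)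
      rw [φm']; positivity
    have hargsplit : ((Real.pi * t : ℝ) : ℂ) - Complex.I * (t : ℂ) * (z : ℂ)
        - ((2 * Real.pi * t : ℝ) : ℂ) + ((Real.log (1 + E) : ℝ) : ℂ)
        = ((Real.pi * t + (-(2 * Real.pi * t)) + Real.log (1 + E) : ℝ) : ℂ)
          + (-(Complex.I * (t : ℂ) * (z : ℂ))) := by push_cast; ring
    rw [hargsplit, Complex.exp_add, ← Complex.ofReal_exp, Real.exp_add, Real.exp_add,
      Real.exp_log h1E, abs_of_pos hφ'pos, Complex.real_smul]
    have hreal : φm' t * (Real.exp (Real.pi * t) * Real.exp (-(2 * Real.pi * t)) * (1 + E))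
        = Real.pi * (Real.cosh (Real.pi * t))⁻¹ := by
      have ha : 0 < Real.exp (Real.pi * t) := Real.exp_pos _
      have hE2 : E = Real.exp (Real.pi * t) * Real.exp (Real.pi * t) := by
        rw [hEdef, ← Real.exp_add]; ring_nf
      rw [φm', Real.cosh_eq, Real.exp_neg, Real.exp_neg, ← hEdef, hE2]
      field_simp
      ring
    have hrealC : ((φm' t * (Real.exp (Real.pi * t) * Real.exp (-(2 * Real.pi * t)) * (1 + E)) : ℝ) : ℂ)
        = ((Real.pi * (Real.cosh (Real.pi * t))⁻¹ : ℝ) : ℂ) := congrArg (fun r : ℝ => (r : ℂ)) hreal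
    calc ((φm' t : ℝ) : ℂ) * (((Real.exp (Real.pi * t) * Real.exp (-(2 * Real.pi * t)) * (1 + E) : ℝ) : ℂ)
            * Complex.exp (-(Complex.I * (t : ℂ) * (z : ℂ))))
        = ((φm' t * (Real.exp (Real.pi * t) * Real.exp (-(2 * Real.pi * t)) * (1 + E)) : ℝ) : ℂ)
            * Complex.exp (-(Complex.I * (t : ℂ) * (z : ℂ))) := by push_cast; ring
      _ = ((Real.pi * (Real.cosh (Real.pi * t))⁻¹ : ℝ) : ℂ)
            * Complex.exp (-(Complex.I * (t : ℂ) * (z : ℂ))) := by rw [hrealC]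
      _ = (Real.pi : ℂ) * (Complex.exp (-(Complex.I * (t : ℂ) * (z : ℂ)))
            / ((Real.cosh (Real.pi * t) : ℝ) : ℂ)) := by push_cast; ring
  -- rewrite the substituted integral
  simp_rw [hpt] at htrans
  rw [integral_const_mul] at htrans
  -- identify with the Beta integral
  have hπ : ((Real.pi : ℝ) : ℂ) ≠ 0 := by exact_mod_cast Real.pi_ne_zero
  have hbetaeq : Complex.betaIntegral (cc z) (1 - cc z)
      = ∫ x in Ioo (0:ℝ) 1, (x : ℂ) ^ (cc z - 1) * ((1:ℂ) - (x : ℂ)) ^ (-(cc z)) := by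
    rw [Complex.betaIntegral, intervalIntegral.integral_of_le zero_le_one,
      integral_Ioc_eq_integral_Ioo]
    congr 1
    funext x
    rw [show (1 : ℂ) - cc z - 1 = -(cc z) by ring]
  have hgamma : Complex.betaIntegral (cc z) (1 - cc z)
      = (Real.pi : ℂ) / Complex.sin ((Real.pi : ℂ) * cc z) := by
    have h1 := Complex.Gamma_mul_Gamma_eq_betaIntegral
      (by rw [cc_re]; norm_num : 0 < (cc z).re)
      (by rw [one_sub_cc_re]; norm_num : 0 < (1 - cc z).re)
    rw [show cc z + (1 - cc z) = 1 by ring, Complex.Gamma_one, one_mul] at h1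
    rw [← h1, Complex.Gamma_mul_Gamma_one_sub]
  have hsin : Complex.sin ((Real.pi : ℂ) * cc z) = ((Real.cosh (z/2) : ℝ) : ℂ) := by
    have harg : (Real.pi : ℂ) * cc z = (Real.pi : ℂ) / 2 - ((z : ℂ) / 2) * Complex.I := by
      rw [cc]; field_simp
    rw [harg, Complex.sin_pi_div_two_sub, Complex.cos_mul_I,
      show ((z:ℂ)/2) = ((z/2 : ℝ) : ℂ) by push_cast; ring, ← Complex.ofReal_cosh]
  have hfinal : (Real.pi : ℂ) * (∫ t : ℝ, Complex.exp (-(Complex.I * (t : ℂ) * (z : ℂ)))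
      / ((Real.cosh (Real.pi * t) : ℝ) : ℂ))
      = (Real.pi : ℂ) * (((Real.cosh (z/2) : ℝ) : ℂ))⁻¹ := by
    rw [← htrans, ← hbetaeq, hgamma, hsin, div_eq_mul_inv]
  exact mul_left_cancel₀ hπ hfinal


lemma A_ne (t : ℝ) : A t ≠ 0 := by
  rw [A_eq, ← Complex.ofReal_cosh]
  refine mul_ne_zero (mul_ne_zero two_ne_zero Complex.I_ne_zero) ?_
  exact_mod_cast (Real.cosh_pos (Real.pi * t)).ne'

def F' (x : ℝ) (t : ℝ) : ℂ := Complex.I * Complex.exp (-Complex.I * wc t * (x : ℂ)) / A t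

lemma coshC_ne (t : ℝ) : ((Real.cosh (Real.pi * t) : ℝ) : ℂ) ≠ 0 := by
  exact_mod_cast (Real.cosh_pos (Real.pi * t)).ne'

lemma F'_eval (z t : ℝ) :
    F' z t = (Complex.exp ((z : ℂ)/2) / 2) *
      (Complex.exp (-(Complex.I * (t : ℂ) * (z : ℂ))) / ((Real.cosh (Real.pi * t) : ℝ) : ℂ)) := by
  have hsplit : -Complex.I * wc t * (z : ℂ) = (z : ℂ)/2 + (-(Complex.I * (t : ℂ) * (z : ℂ))) := by
    rw [wc]; ring_nf; rw [Complex.I_sq]; ring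
  rw [F', hsplit, Complex.exp_add, A_eq, ← Complex.ofReal_cosh]
  field_simp [Complex.I_ne_zero, coshC_ne]

lemma g0_norm_le (z t : ℝ) :
    ‖g0 z t‖ ≤ Real.exp (z/2) * (Real.cosh (Real.pi * t))⁻¹ := by
  rw [g0, norm_mul, norm_div, exp_norm, A_norm, norm_neg, norm_inv]
  have hw := wc_norm_ge t
  have hwinv : ‖wc t‖⁻¹ ≤ 2 := by
    calc ‖wc t‖⁻¹ ≤ ((1:ℝ)/2)⁻¹ := inv_anti₀ (by norm_num) hw
      _ = 2 := by norm_num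
  have hC : 0 < Real.cosh (Real.pi * t) := Real.cosh_pos _
  have hE : 0 < Real.exp (z/2) := Real.exp_pos _
  calc Real.exp (z/2) / (2 * Real.cosh (Real.pi * t)) * ‖wc t‖⁻¹
      ≤ Real.exp (z/2) / (2 * Real.cosh (Real.pi * t)) * 2 :=
        mul_le_mul_of_nonneg_left hwinv (by positivity)
    _ = Real.exp (z/2) * (Real.cosh (Real.pi * t))⁻¹ := by
        field_simp

lemma g0_meas (z : ℝ) : AEStronglyMeasurable (fun t => g0 z t) volume := by
  apply Measurable.aestronglyMeasurable
  unfold g0 A wc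
  fun_prop

lemma F'_meas (z : ℝ) : AEStronglyMeasurable (fun t => F' z t) volume := by
  apply Measurable.aestronglyMeasurable
  unfold F' A wc
  fun_prop

lemma g0_integrable (z : ℝ) : Integrable (fun t => g0 z t) := by
  apply (integrable_inv_cosh.const_mul (Real.exp (z/2))).mono' (g0_meas z)
  exact Eventually.of_forall (g0_norm_le z)

lemma hasDerivAt_g0 (t x : ℝ) : HasDerivAt (fun x : ℝ => g0 x t) (F' x t) x := by
  have h1 : HasDerivAt (fun y : ℂ => Complex.exp (-Complex.I * wc t * y))
      (Complex.exp (-Complex.I * wc t * (x : ℂ)) * (-Complex.I * wc t)) (x : ℂ) := by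
    simpa using ((hasDerivAt_id ((x : ℝ) : ℂ)).const_mul (-Complex.I * wc t)).cexp
  have h2 := (h1.mul_const ((A t)⁻¹ * (-(wc t)⁻¹))).comp_ofReal
  have hfun : (fun x : ℝ => Complex.exp (-Complex.I * wc t * (x : ℂ))
      * ((A t)⁻¹ * (-(wc t)⁻¹))) = fun x : ℝ => g0 x t := by
    funext y; rw [g0]; ring
  rw [hfun] at h2
  convert h2 using 1
  rw [F']
  field_simp [wc_ne t, A_ne t]

lemma F'_norm (x t : ℝ) : ‖F' x t‖ = Real.exp (x/2) / (2 * Real.cosh (Real.pi * t)) := by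
  rw [F', norm_div, norm_mul, exp_norm, A_norm, Complex.norm_I, one_mul]

lemma hasDeriv_J (z : ℝ) :
    HasDerivAt (fun x : ℝ => ∫ t : ℝ, g0 x t)
      (Complex.exp (z : ℂ) / (Complex.exp (z : ℂ) + 1)) z := by
  have key := hasDerivAt_integral_of_dominated_loc_of_deriv_le (μ := volume)
    (F := fun (x : ℝ) (t : ℝ) => g0 x t) (F' := fun x t => F' x t)
    (bound := fun t => Real.exp ((z+1)/2) * (Real.cosh (Real.pi * t))⁻¹)
    (Metric.ball_mem_nhds z one_pos)
    (Eventually.of_forall (fun x => g0_meas x))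
    (g0_integrable z)
    (F'_meas z)
    (Eventually.of_forall (fun t => ?_))
    (integrable_inv_cosh.const_mul _)
    (Eventually.of_forall (fun t x _ => hasDerivAt_g0 t x))
  · obtain ⟨-, hD⟩ := key
    have hval : (∫ t : ℝ, F' z t) = Complex.exp (z : ℂ) / (Complex.exp (z : ℂ) + 1) := by
      have h1 : (∫ t : ℝ, F' z t) = (Complex.exp ((z : ℂ)/2) / 2) *
          ∫ t : ℝ, Complex.exp (-(Complex.I * (t : ℂ) * (z : ℂ)))
            / ((Real.cosh (Real.pi * t) : ℝ) : ℂ) := by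
        rw [← integral_const_mul]
        exact integral_congr_ae (Eventually.of_forall (fun t => F'_eval z t))
      rw [h1, Kval]
      have ha : (0:ℝ) < Real.exp (z/2) := Real.exp_pos _
      have hreal : Real.exp (z/2) / 2 * (Real.cosh (z/2))⁻¹
          = Real.exp z / (Real.exp z + 1) := by
        rw [Real.cosh_eq, Real.exp_neg,
          show Real.exp z = Real.exp (z/2) * Real.exp (z/2) by rw [← Real.exp_add]; ring_nf]
        field_simp
      calc Complex.exp ((z : ℂ)/2) / 2 * (((Real.cosh (z/2) : ℝ)) : ℂ)⁻¹
          = ((Real.exp (z/2) / 2 * (Real.cosh (z/2))⁻¹ : ℝ) : ℂ) := by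
            rw [show ((z : ℂ)/2) = ((z/2 : ℝ) : ℂ) by push_cast; ring, ← Complex.ofReal_exp]
            push_cast
            ring
        _ = ((Real.exp z / (Real.exp z + 1) : ℝ) : ℂ) :=
            congrArg (fun r : ℝ => (r : ℂ)) hreal
        _ = Complex.exp (z : ℂ) / (Complex.exp (z : ℂ) + 1) := by
            push_cast [← Complex.ofReal_exp]
            norm_num
    rwa [hval] at hD
  · -- bound on ball z 1
    intro x hx
    rw [F'_norm]
    have hC := Real.one_le_cosh (Real.pi * t)
    have hCpos : (0:ℝ) < Real.cosh (Real.pi * t) := Real.cosh_pos _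
    have hxz : x ≤ z + 1 := by
      have := Metric.mem_ball.mp hx
      have := abs_lt.mp (by rwa [Real.dist_eq] at this)
      linarith [this.1, this.2]
    have hexp : Real.exp (x/2) ≤ Real.exp ((z+1)/2) :=
      Real.exp_le_exp.mpr (by linarith)
    calc Real.exp (x/2) / (2 * Real.cosh (Real.pi * t))
        ≤ Real.exp ((z+1)/2) / (2 * Real.cosh (Real.pi * t)) := by
          gcongr
      _ ≤ Real.exp ((z+1)/2) * (Real.cosh (Real.pi * t))⁻¹ := by
          rw [div_eq_mul_inv]
          apply mul_le_mul_of_nonneg_left ?_ (Real.exp_pos _).le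
          apply inv_anti₀ hCpos
          linarith

lemma hasDeriv_L (z : ℝ) :
    HasDerivAt (fun x : ℝ => ((Real.log (Real.exp x + 1) : ℝ) : ℂ))
      (Complex.exp (z : ℂ) / (Complex.exp (z : ℂ) + 1)) z := by
  have h1 : HasDerivAt (fun x : ℝ => Real.exp x + 1) (Real.exp z) z :=
    (Real.hasDerivAt_exp z).add_const 1
  have h2 := h1.log (by positivity)
  have h3 := h2.ofReal_comp
  convert h3 using 1
  push_cast [← Complex.ofReal_exp]
  norm_num

lemma J_atBot : Tendsto (fun x : ℝ => ∫ t : ℝ, g0 x t) atBot (nhds 0) := by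
  set C : ℝ := ∫ t : ℝ, (Real.cosh (Real.pi * t))⁻¹ with hC
  have hb : ∀ x : ℝ, ‖∫ t : ℝ, g0 x t‖ ≤ Real.exp (x/2) * C := by
    intro x
    have h1 : ‖∫ t : ℝ, g0 x t‖ ≤ ∫ t : ℝ, Real.exp (x/2) * (Real.cosh (Real.pi * t))⁻¹ := by
      apply norm_integral_le_of_norm_le (integrable_inv_cosh.const_mul _)
      exact Eventually.of_forall (g0_norm_le x)
    rwa [integral_const_mul] at h1
  apply squeeze_zero_norm hb
  have h2 : Tendsto (fun x : ℝ => Real.exp (x/2)) atBot (nhds 0) :=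
    Real.tendsto_exp_atBot.comp (tendsto_id.atBot_div_const two_pos)
  simpa using h2.mul_const C

lemma L_atBot :
    Tendsto (fun x : ℝ => ((Real.log (Real.exp x + 1) : ℝ) : ℂ)) atBot (nhds 0) := by
  have h1 : Tendsto (fun x : ℝ => Real.exp x + 1) atBot (nhds 1) := by
    simpa using Real.tendsto_exp_atBot.add_const 1
  have h2 : Tendsto (fun x : ℝ => Real.log (Real.exp x + 1)) atBot (nhds 0) := by
    have := (Real.continuousAt_log one_ne_zero).tendsto.comp h1
    simpa [Function.comp_def] using this
  have := (Complex.continuous_ofReal.tendsto 0).comp h2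
  simpa [Function.comp_def] using this

lemma keyJ (z : ℝ) :
    (∫ t : ℝ, g0 z t) = ((Real.log (Real.exp z + 1) : ℝ) : ℂ) := by
  set f : ℝ → ℂ := fun x => (∫ t : ℝ, g0 x t) - ((Real.log (Real.exp x + 1) : ℝ) : ℂ) with hf
  have hderiv : ∀ x : ℝ, HasDerivAt f 0 x := by
    intro x
    simpa [hf, Pi.sub_def] using (hasDeriv_J x).sub (hasDeriv_L x)
  have hconst : ∀ x y : ℝ, f x = f y := fun x y =>
    is_const_of_deriv_eq_zero (fun w => (hderiv w).differentiableAt)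
      (fun w => (hderiv w).deriv) x y
  have hlim : Tendsto f atBot (nhds 0) := by
    simpa using J_atBot.sub L_atBot
  have hzero : f z = 0 := by
    have hc : Tendsto f atBot (nhds (f z)) := by
      have : f = fun _ => f z := funext (fun x => hconst x z)
      rw [this]
      exact tendsto_const_nhds
    exact tendsto_nhds_unique hc hlim
  have := sub_eq_zero.mp hzero
  exact this

end QLogAux

open QLogAux in
theorem stmt9 (z : ℝ) :
    Filter.Tendsto (fun ℏ : ℝ => qlog ℏ (z : ℂ)) (nhdsWithin 0 (Set.Ioi 0))
      (nhds ((Real.log (Real.exp z + 1) : ℝ) : ℂ)) := by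
  have hmain : Filter.Tendsto (fun ℏ : ℝ => ∫ t : ℝ, Fi ℏ z t)
      (nhdsWithin 0 (Set.Ioi 0)) (nhds (∫ t : ℝ, g0 z t)) := by
    apply MeasureTheory.tendsto_integral_filter_of_dominated_convergence
      (bound := fun t => Real.pi * Real.exp (z/2) * (Real.cosh (Real.pi * t))⁻¹)
    · exact Filter.Eventually.of_forall (fun ℏ => Fi_meas ℏ z)
    · filter_upwards [Ioo_mem_nhdsGT one_pos] with ℏ hℏ
      exact Filter.Eventually.of_forall (fun t => Fi_bound hℏ z t)
    · exact integrable_inv_cosh.const_mul _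
    · exact Filter.Eventually.of_forall (fun t => tendsto_Fi z t)
  have heq : ∀ ℏ : ℝ, qlog ℏ (z : ℂ) = ∫ t : ℝ, Fi ℏ z t := by
    intro ℏ
    rw [qlog]
    simp only [Fi]
    exact (MeasureTheory.integral_const_mul _ _).symm
  rw [← keyJ z]
  exact hmain.congr (fun ℏ => (heq ℏ).symm)

end
end

section
/- Let ℏ > 0 and let z be a complex number with |Im z| < π(1+ℏ). Then the quantum logarithm satisfies conj(φ^ℏ(z)) = φ^ℏ(conj(z)). In particular, φ^ℏ(x) is real for real x. -/
noncomputable section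

open Complex

def qlogKernel (ℏ : ℝ) (z w : ℂ) : ℂ :=
  exp (-I * w * z) /
    ((exp ((Real.pi : ℂ) * w) - exp (-((Real.pi : ℂ) * w))) *
     (exp ((Real.pi : ℂ) * (ℏ : ℂ) * w) - exp (-((Real.pi : ℂ) * (ℏ : ℂ) * w))))

lemma qlog_eq_integral_qlogKernel (ℏ : ℝ) (z : ℂ) :
    qlog ℏ z = (-(2 * Real.pi * ℏ) : ℝ) * ∫ t : ℝ, qlogKernel ℏ z (qContour ℏ t) :=
  rfl

-- Both factors of the denominator are odd in `w`, so their signs cancel.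
lemma conj_qlogKernel (ℏ : ℝ) (z w : ℂ) :
    (starRingEnd ℂ) (qlogKernel ℏ z w) = qlogKernel ℏ ((starRingEnd ℂ) z) (-(starRingEnd ℂ) w) := by
  have hodd : ∀ a : ℂ, exp (a * -(starRingEnd ℂ) w) - exp (-(a * -(starRingEnd ℂ) w))
      = -(exp (a * (starRingEnd ℂ) w) - exp (-(a * (starRingEnd ℂ) w))) := by
    intro a
    rw [mul_neg, neg_neg, neg_sub]
  simp only [qlogKernel, map_div₀, map_mul, map_sub, map_neg, ← exp_conj, conj_I, conj_ofReal]
  rw [hodd, hodd, neg_mul_neg]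
  ring_nf

lemma neg_conj_qContour (ℏ t : ℝ) : -(starRingEnd ℂ) (qContour ℏ t) = qContour ℏ (-t) := by
  simp only [qContour, map_add, map_mul, conj_ofReal, conj_I, ofReal_neg]
  ring

theorem stmt11_general (ℏ : ℝ) (z : ℂ) :
    (starRingEnd ℂ) (qlog ℏ z) = qlog ℏ ((starRingEnd ℂ) z) := by
  rw [qlog_eq_integral_qlogKernel, qlog_eq_integral_qlogKernel, map_mul, conj_ofReal,
    ← integral_conj]
  simp only [conj_qlogKernel, neg_conj_qContour]
  rw [MeasureTheory.integral_neg_eq_self (fun t => qlogKernel ℏ ((starRingEnd ℂ) z) (qContour ℏ t))]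

theorem stmt11 (ℏ : ℝ) (hℏ : 0 < ℏ) (z : ℂ) (hz : |z.im| < Real.pi * (1 + ℏ)) :
    (starRingEnd ℂ) (qlog ℏ z) = qlog ℏ ((starRingEnd ℂ) z) :=
  stmt11_general ℏ z

end
end

section
/- Let ℏ > 0. The quantum dilogarithm Φ^ℏ is differentiable on the strip |Im z| < π(1+ℏ), and its logarithmic derivative is the quantum logarithm: 2πiℏ·(Φ^ℏ)'(z) = φ^ℏ(z)·Φ^ℏ(z) for all z with |Im z| < π(1+ℏ). -/
noncomputable section

open Complex

section AuxLemmas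
open MeasureTheory Set Metric

/-- lower bound for `|sinh|` on horizontal lines -/
lemma aux_sinh (x y : ℝ) :
    Real.cosh x * |Real.sin y| ≤ ‖Complex.sinh ((x : ℂ) + (y : ℂ) * Complex.I)‖ := by
  have him : (Complex.sinh ((x : ℂ) + (y : ℂ) * Complex.I)).im = Real.cosh x * Real.sin y := by
    rw [Complex.sinh_add, Complex.sinh_mul_I, Complex.cosh_mul_I]
    simp [Complex.add_im, Complex.mul_im, Complex.sinh_ofReal_re, Complex.sinh_ofReal_im,
      Complex.cosh_ofReal_re, Complex.cosh_ofReal_im, Complex.sin_ofReal_re,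
      Complex.sin_ofReal_im, Complex.cos_ofReal_re, Complex.cos_ofReal_im]
  have h := Complex.abs_im_le_norm (Complex.sinh ((x : ℂ) + (y : ℂ) * Complex.I))
  rw [him] at h
  calc Real.cosh x * |Real.sin y| = |Real.cosh x * Real.sin y| := by
        rw [abs_mul, abs_of_pos (Real.cosh_pos x)]
    _ ≤ _ := h

lemma aux_cosh (x : ℝ) : Real.exp |x| ≤ 2 * Real.cosh x := by
  rw [Real.cosh_eq]
  rcases abs_cases x with ⟨h, _⟩ | ⟨h, _⟩ <;> rw [h] <;>
    nlinarith [Real.exp_pos x, Real.exp_pos (-x)]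

lemma aux_int {a : ℝ} (ha : 0 < a) :
    MeasureTheory.Integrable fun t : ℝ => Real.exp (-(a * |t|)) := by
  have h1 : IntegrableOn (fun t : ℝ => Real.exp (-(a * |t|))) (Set.Ioi 0) := by
    refine (exp_neg_integrableOn_Ioi 0 ha).congr_fun (fun t ht => ?_) measurableSet_Ioi
    rw [abs_of_pos ht]; simp only [neg_mul]
  have h2 : IntegrableOn (fun t : ℝ => Real.exp (-(a * |t|))) (Set.Iic 0) := by
    rw [← Measure.map_neg_eq_self (volume : Measure ℝ)]
    have m : MeasurableEmbedding fun x : ℝ => -x :=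
      (Homeomorph.neg ℝ).measurableEmbedding
    rw [m.integrableOn_map_iff]
    simp only [Function.comp_def, abs_neg, neg_preimage, neg_Iic, neg_zero]
    exact Iff.mpr integrableOn_Ici_iff_integrableOn_Ioi h1
  rw [← MeasureTheory.integrableOn_univ, ← Set.Iic_union_Ioi (a := (0:ℝ))]
  exact h2.union h1

end AuxLemmas

open MeasureTheory Set Metric

/-- The quantum dilogarithm
`Φ^ℏ(z) = exp(−(1/4) ∫_ℝ e^{−i(t+iδ)z} / (sinh(π(t+iδ))·sinh(πℏ(t+iδ))·(t+iδ)) dt)`. -/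
def qdilog (ℏ : ℝ) (z : ℂ) : ℂ :=
  Complex.exp (-(1 / 4 : ℂ) *
    ∫ t : ℝ,
      Complex.exp (-Complex.I * qContour ℏ t * z) /
        (Complex.sinh ((Real.pi : ℂ) * qContour ℏ t) *
         Complex.sinh ((Real.pi : ℂ) * (ℏ : ℂ) * qContour ℏ t) * qContour ℏ t))



theorem stmt14 (ℏ : ℝ) (hℏ : 0 < ℏ) (z : ℂ) (hz : |z.im| < Real.pi * (1 + ℏ)) :
    DifferentiableAt ℂ (qdilog ℏ) z ∧
    2 * (Real.pi : ℂ) * Complex.I * (ℏ : ℂ) * deriv (qdilog ℏ) z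
      = qlog ℏ z * qdilog ℏ z := by
  have hπ := Real.pi_pos
  set δ : ℝ := min 1 ℏ⁻¹ / 2 with hδdef
  have hδ0 : 0 < δ := div_pos (lt_min one_pos (inv_pos.mpr hℏ)) two_pos
  have hδhalf : δ ≤ 1 / 2 := by
    rw [hδdef]; gcongr; exact min_le_left _ _
  have hℏδ : ℏ * δ ≤ 1 / 2 := by
    rw [hδdef, ← mul_div_assoc]
    have : ℏ * min 1 ℏ⁻¹ ≤ 1 := by
      calc ℏ * min 1 ℏ⁻¹ ≤ ℏ * ℏ⁻¹ := by gcongr; exact min_le_right _ _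
        _ = 1 := mul_inv_cancel₀ hℏ.ne'
    linarith
  have hs₁ : 0 < Real.sin (Real.pi * δ) :=
    Real.sin_pos_of_pos_of_lt_pi (by positivity) (by nlinarith)
  have hs₂ : 0 < Real.sin (Real.pi * (ℏ * δ)) :=
    Real.sin_pos_of_pos_of_lt_pi (by positivity) (by nlinarith)
  -- contour identities
  have hc1 : ∀ t : ℝ, (Real.pi : ℂ) * qContour ℏ t
      = ((Real.pi * t : ℝ) : ℂ) + ((Real.pi * δ : ℝ) : ℂ) * Complex.I := by
    intro t; simp only [qContour, ← hδdef]; push_cast; ring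
  have hc2 : ∀ t : ℝ, (Real.pi : ℂ) * (ℏ : ℂ) * qContour ℏ t
      = ((Real.pi * ℏ * t : ℝ) : ℂ) + ((Real.pi * (ℏ * δ) : ℝ) : ℂ) * Complex.I := by
    intro t; simp only [qContour, ← hδdef]; push_cast; ring
  have hA1 : ∀ t : ℝ, Real.cosh (Real.pi * t) * Real.sin (Real.pi * δ)
      ≤ ‖Complex.sinh ((Real.pi : ℂ) * qContour ℏ t)‖ := by
    intro t
    have := aux_sinh (Real.pi * t) (Real.pi * δ)
    rwa [abs_of_pos hs₁, ← hc1 t] at this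
  have hA2 : ∀ t : ℝ, Real.cosh (Real.pi * ℏ * t) * Real.sin (Real.pi * (ℏ * δ))
      ≤ ‖Complex.sinh ((Real.pi : ℂ) * (ℏ : ℂ) * qContour ℏ t)‖ := by
    intro t
    have := aux_sinh (Real.pi * ℏ * t) (Real.pi * (ℏ * δ))
    rwa [abs_of_pos hs₂, ← hc2 t] at this
  have hS1ne : ∀ t : ℝ, Complex.sinh ((Real.pi : ℂ) * qContour ℏ t) ≠ 0 := by
    intro t h
    have h1 := hA1 t
    rw [h] at h1; simp only [norm_zero] at h1
    nlinarith [Real.cosh_pos (Real.pi * t)]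
  have hS2ne : ∀ t : ℝ, Complex.sinh ((Real.pi : ℂ) * (ℏ : ℂ) * qContour ℏ t) ≠ 0 := by
    intro t h
    have h1 := hA2 t
    rw [h] at h1; simp only [norm_zero] at h1
    nlinarith [Real.cosh_pos (Real.pi * ℏ * t)]
  have hqim : ∀ t : ℝ, (qContour ℏ t).im = δ := by
    intro t; simp [qContour, ← hδdef]
  have hqre : ∀ t : ℝ, (qContour ℏ t).re = t := by
    intro t; simp [qContour]
  have hcne : ∀ t : ℝ, qContour ℏ t ≠ 0 := by
    intro t h
    have := hqim t
    rw [h] at this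
    simp only [Complex.zero_im] at this
    exact hδ0.ne this
  have habsc : ∀ t : ℝ, δ ≤ ‖qContour ℏ t‖ := by
    intro t
    have := Complex.abs_im_le_norm (qContour ℏ t)
    rwa [hqim t, abs_of_pos hδ0] at this
  have hre : ∀ (t : ℝ) (w : ℂ), (-Complex.I * qContour ℏ t * w).re = δ * w.re + t * w.im := by
    intro t w
    simp [qContour, ← hδdef, Complex.mul_re, Complex.mul_im]
    ring

  -- continuity
  have hcont_c : Continuous (qContour ℏ) := by
    unfold qContour
    exact Complex.continuous_ofReal.add continuous_const
  have hcontE : ∀ w : ℂ, Continuous fun t : ℝ => Complex.exp (-Complex.I * qContour ℏ t * w) :=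
    fun w => Complex.continuous_exp.comp (((continuous_const.mul hcont_c)).mul continuous_const)
  have hcontS : Continuous fun t : ℝ =>
      Complex.sinh ((Real.pi : ℂ) * qContour ℏ t)
        * Complex.sinh ((Real.pi : ℂ) * (ℏ : ℂ) * qContour ℏ t) :=
    (Complex.continuous_sinh.comp (continuous_const.mul hcont_c)).mul
      (Complex.continuous_sinh.comp (continuous_const.mul hcont_c))
  have hcontF : ∀ w : ℂ, Continuous fun t : ℝ =>
      Complex.exp (-Complex.I * qContour ℏ t * w) /
        (Complex.sinh ((Real.pi : ℂ) * qContour ℏ t) *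
         Complex.sinh ((Real.pi : ℂ) * (ℏ : ℂ) * qContour ℏ t) * qContour ℏ t) := by
    intro w
    exact (hcontE w).div (hcontS.mul hcont_c)
      (fun t => mul_ne_zero (mul_ne_zero (hS1ne t) (hS2ne t)) (hcne t))
  have hcontF' : ∀ w : ℂ, Continuous fun t : ℝ =>
      -Complex.I * Complex.exp (-Complex.I * qContour ℏ t * w) /
        (Complex.sinh ((Real.pi : ℂ) * qContour ℏ t) *
         Complex.sinh ((Real.pi : ℂ) * (ℏ : ℂ) * qContour ℏ t)) := by
    intro w
    exact (continuous_const.mul (hcontE w)).div hcontS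
      (fun t => mul_ne_zero (hS1ne t) (hS2ne t))
  -- the radius
  set ε : ℝ := (Real.pi * (1 + ℏ) - |z.im|) / 2 with hεdef
  have hε : 0 < ε := by rw [hεdef]; linarith
  -- bound
  set bound : ℝ → ℝ := fun t =>
    4 / (Real.sin (Real.pi * δ) * Real.sin (Real.pi * (ℏ * δ))) *
      Real.exp (δ * (z.re + ε)) * Real.exp (-(ε * |t|)) with hbounddef
  have hbound_int : Integrable bound := ((aux_int hε).const_mul _)
  -- norm of F'
  have hnormF' : ∀ (w : ℂ) (t : ℝ),
      ‖-Complex.I * Complex.exp (-Complex.I * qContour ℏ t * w) /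
        (Complex.sinh ((Real.pi : ℂ) * qContour ℏ t) *
         Complex.sinh ((Real.pi : ℂ) * (ℏ : ℂ) * qContour ℏ t))‖
      = Real.exp (δ * w.re + t * w.im) /
        (‖Complex.sinh ((Real.pi : ℂ) * qContour ℏ t)‖ *
         ‖Complex.sinh ((Real.pi : ℂ) * (ℏ : ℂ) * qContour ℏ t)‖) := by
    intro w t
    rw [norm_div, norm_mul, norm_mul]
    simp only [Complex.norm_exp]
    simp
    rw [hqre t, hqim t]
    ring_nf
  -- the key uniform bound
  have hkey : ∀ (t : ℝ), ∀ w ∈ ball z ε,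
      ‖-Complex.I * Complex.exp (-Complex.I * qContour ℏ t * w) /
        (Complex.sinh ((Real.pi : ℂ) * qContour ℏ t) *
         Complex.sinh ((Real.pi : ℂ) * (ℏ : ℂ) * qContour ℏ t))‖ ≤ bound t := by
    intro t w hw
    rw [mem_ball, Complex.dist_eq] at hw
    have hwre : w.re ≤ z.re + ε := by
      have h1 : |(w - z).re| ≤ ‖w - z‖ := Complex.abs_re_le_norm _
      rw [Complex.sub_re] at h1
      have := abs_lt.mp (lt_of_le_of_lt h1 hw)
      linarith [this.2]
    have hwim : |w.im| ≤ |z.im| + ε := by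
      have h1 : |(w - z).im| ≤ ‖w - z‖ := Complex.abs_im_le_norm _
      rw [Complex.sub_im] at h1
      have h2 : |w.im - z.im| < ε := lt_of_le_of_lt h1 hw
      have h3 := abs_sub_abs_le_abs_sub w.im z.im
      linarith
    rw [hnormF' w t]
    have hd1 : 0 < Real.cosh (Real.pi * t) * Real.sin (Real.pi * δ) := by
      positivity
    have hd2 : 0 < Real.cosh (Real.pi * ℏ * t) * Real.sin (Real.pi * (ℏ * δ)) := by
      positivity
    have hnum : δ * w.re + t * w.im ≤ δ * (z.re + ε) + |t| * (|z.im| + ε) := by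
      have h1 : δ * w.re ≤ δ * (z.re + ε) := by gcongr
      have h2 : t * w.im ≤ |t| * (|z.im| + ε) := by
        calc t * w.im ≤ |t * w.im| := le_abs_self _
          _ = |t| * |w.im| := abs_mul _ _
          _ ≤ |t| * (|z.im| + ε) := by gcongr
      linarith
    have hcosh1 : Real.exp (Real.pi * |t|) / 2 ≤ Real.cosh (Real.pi * t) := by
      have := aux_cosh (Real.pi * t)
      rw [abs_mul, abs_of_pos hπ] at this
      linarith
    have hcosh2 : Real.exp (Real.pi * ℏ * |t|) / 2 ≤ Real.cosh (Real.pi * ℏ * t) := by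
      have := aux_cosh (Real.pi * ℏ * t)
      rw [abs_mul, abs_of_pos (by positivity : (0:ℝ) < Real.pi * ℏ)] at this
      linarith
    calc Real.exp (δ * w.re + t * w.im) /
          (‖Complex.sinh ((Real.pi : ℂ) * qContour ℏ t)‖ *
           ‖Complex.sinh ((Real.pi : ℂ) * (ℏ : ℂ) * qContour ℏ t)‖)
        ≤ Real.exp (δ * (z.re + ε) + |t| * (|z.im| + ε)) /
          ((Real.cosh (Real.pi * t) * Real.sin (Real.pi * δ)) *
           (Real.cosh (Real.pi * ℏ * t) * Real.sin (Real.pi * (ℏ * δ)))) := by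
          apply div_le_div₀ (Real.exp_pos _).le (Real.exp_le_exp.mpr hnum)
            (by positivity)
          exact mul_le_mul (hA1 t) (hA2 t) hd2.le (norm_nonneg _)
      _ ≤ Real.exp (δ * (z.re + ε) + |t| * (|z.im| + ε)) /
          ((Real.exp (Real.pi * |t|) / 2 * Real.sin (Real.pi * δ)) *
           (Real.exp (Real.pi * ℏ * |t|) / 2 * Real.sin (Real.pi * (ℏ * δ)))) := by
          apply div_le_div_of_nonneg_left (Real.exp_pos _).le (by positivity)
          have e1 : 0 < Real.exp (Real.pi * |t|) / 2 * Real.sin (Real.pi * δ) := by positivity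
          exact mul_le_mul (by gcongr) (by gcongr) (by positivity) hd1.le
      _ = bound t := by
          rw [hbounddef]
          have hsplit : Real.exp (δ * (z.re + ε) + |t| * (|z.im| + ε))
              = Real.exp (δ * (z.re + ε)) *
                (Real.exp (-(ε * |t|)) * Real.exp (Real.pi * |t|) * Real.exp (Real.pi * ℏ * |t|)) := by
            rw [← Real.exp_add, ← Real.exp_add, ← Real.exp_add]
            congr 1
            rw [hεdef]
            ring
          rw [hsplit]
          field_simp
          ring
  -- integrability of F z
  have hFz_int : Integrable fun t : ℝ =>
      Complex.exp (-Complex.I * qContour ℏ t * z) /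
        (Complex.sinh ((Real.pi : ℂ) * qContour ℏ t) *
         Complex.sinh ((Real.pi : ℂ) * (ℏ : ℂ) * qContour ℏ t) * qContour ℏ t) := by
    apply Integrable.mono' (hbound_int.mul_const δ⁻¹) ((hcontF z).aestronglyMeasurable)
    refine Filter.Eventually.of_forall fun t => ?_
    have heq : ‖Complex.exp (-Complex.I * qContour ℏ t * z) /
        (Complex.sinh ((Real.pi : ℂ) * qContour ℏ t) *
         Complex.sinh ((Real.pi : ℂ) * (ℏ : ℂ) * qContour ℏ t) * qContour ℏ t)‖
        = ‖-Complex.I * Complex.exp (-Complex.I * qContour ℏ t * z) /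
          (Complex.sinh ((Real.pi : ℂ) * qContour ℏ t) *
           Complex.sinh ((Real.pi : ℂ) * (ℏ : ℂ) * qContour ℏ t))‖ / ‖qContour ℏ t‖ := by
      rw [norm_div, norm_div, norm_mul, norm_mul]
      simp [div_div]
    rw [heq]
    calc ‖-Complex.I * Complex.exp (-Complex.I * qContour ℏ t * z) /
          (Complex.sinh ((Real.pi : ℂ) * qContour ℏ t) *
           Complex.sinh ((Real.pi : ℂ) * (ℏ : ℂ) * qContour ℏ t))‖ / ‖qContour ℏ t‖
        ≤ bound t / δ := by
          apply div_le_div₀ (by positivity : (0:ℝ) ≤ bound t)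
            (hkey t z (mem_ball_self hε)) hδ0 (habsc t)
      _ = bound t * δ⁻¹ := div_eq_mul_inv _ _
  -- pointwise differentiability in the parameter
  have hdiff : ∀ (t : ℝ), ∀ w ∈ ball z ε,
      HasDerivAt (fun w : ℂ => Complex.exp (-Complex.I * qContour ℏ t * w) /
          (Complex.sinh ((Real.pi : ℂ) * qContour ℏ t) *
           Complex.sinh ((Real.pi : ℂ) * (ℏ : ℂ) * qContour ℏ t) * qContour ℏ t))
        (-Complex.I * Complex.exp (-Complex.I * qContour ℏ t * w) /
          (Complex.sinh ((Real.pi : ℂ) * qContour ℏ t) *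
           Complex.sinh ((Real.pi : ℂ) * (ℏ : ℂ) * qContour ℏ t))) w := by
    intro t w _
    have h0 : HasDerivAt (fun w : ℂ => -Complex.I * qContour ℏ t * w)
        (-Complex.I * qContour ℏ t) w := by
      simpa using (hasDerivAt_id w).const_mul (-Complex.I * qContour ℏ t)
    have h1 := h0.cexp
    have h2 := h1.div_const (Complex.sinh ((Real.pi : ℂ) * qContour ℏ t) *
           Complex.sinh ((Real.pi : ℂ) * (ℏ : ℂ) * qContour ℏ t) * qContour ℏ t)
    refine h2.congr_deriv ?_
    rw [div_eq_div_iff (mul_ne_zero (mul_ne_zero (hS1ne t) (hS2ne t)) (hcne t))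
      (mul_ne_zero (hS1ne t) (hS2ne t))]
    ring
  -- differentiation under the integral sign
  obtain ⟨hint', hderiv⟩ :=
    hasDerivAt_integral_of_dominated_loc_of_deriv_le (μ := (volume : Measure ℝ))
      (F := fun w t => Complex.exp (-Complex.I * qContour ℏ t * w) /
        (Complex.sinh ((Real.pi : ℂ) * qContour ℏ t) *
         Complex.sinh ((Real.pi : ℂ) * (ℏ : ℂ) * qContour ℏ t) * qContour ℏ t))
      (F' := fun w t => -Complex.I * Complex.exp (-Complex.I * qContour ℏ t * w) /
        (Complex.sinh ((Real.pi : ℂ) * qContour ℏ t) *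
         Complex.sinh ((Real.pi : ℂ) * (ℏ : ℂ) * qContour ℏ t)))
      (bound := bound) (x₀ := z) (ball_mem_nhds z hε)
      (Filter.Eventually.of_forall fun w => (hcontF w).aestronglyMeasurable)
      hFz_int
      ((hcontF' z).aestronglyMeasurable)
      (Filter.Eventually.of_forall fun t => hkey t)
      hbound_int
      (Filter.Eventually.of_forall hdiff)
  -- assemble
  have hG := hderiv.const_mul (-(1 / 4 : ℂ))
  have hQ : HasDerivAt (qdilog ℏ)
      (Complex.exp (-(1 / 4 : ℂ) * ∫ t : ℝ,
          Complex.exp (-Complex.I * qContour ℏ t * z) /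
            (Complex.sinh ((Real.pi : ℂ) * qContour ℏ t) *
             Complex.sinh ((Real.pi : ℂ) * (ℏ : ℂ) * qContour ℏ t) * qContour ℏ t)) *
        (-(1 / 4 : ℂ) * ∫ t : ℝ,
          -Complex.I * Complex.exp (-Complex.I * qContour ℏ t * z) /
            (Complex.sinh ((Real.pi : ℂ) * qContour ℏ t) *
             Complex.sinh ((Real.pi : ℂ) * (ℏ : ℂ) * qContour ℏ t)))) z := hG.cexp
  refine ⟨hQ.differentiableAt, ?_⟩
  rw [hQ.deriv]
  have hJ : (∫ t : ℝ,
        -Complex.I * Complex.exp (-Complex.I * qContour ℏ t * z) /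
          (Complex.sinh ((Real.pi : ℂ) * qContour ℏ t) *
           Complex.sinh ((Real.pi : ℂ) * (ℏ : ℂ) * qContour ℏ t)))
      = -Complex.I * ∫ t : ℝ,
          Complex.exp (-Complex.I * qContour ℏ t * z) /
            (Complex.sinh ((Real.pi : ℂ) * qContour ℏ t) *
             Complex.sinh ((Real.pi : ℂ) * (ℏ : ℂ) * qContour ℏ t)) := by
    simp_rw [mul_div_assoc]
    exact integral_const_mul _ _
  have hql : qlog ℏ z = ((-(2 * Real.pi * ℏ) : ℝ) : ℂ) *
      ((1 / 4 : ℂ) * ∫ t : ℝ,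
          Complex.exp (-Complex.I * qContour ℏ t * z) /
            (Complex.sinh ((Real.pi : ℂ) * qContour ℏ t) *
             Complex.sinh ((Real.pi : ℂ) * (ℏ : ℂ) * qContour ℏ t))) := by
    rw [qlog]
    congr 1
    have heq : (fun t : ℝ =>
        Complex.exp (-Complex.I * qContour ℏ t * z) /
          ((Complex.exp ((Real.pi : ℂ) * qContour ℏ t)
              - Complex.exp (-((Real.pi : ℂ) * qContour ℏ t))) *
           (Complex.exp ((Real.pi : ℂ) * (ℏ : ℂ) * qContour ℏ t)
              - Complex.exp (-((Real.pi : ℂ) * (ℏ : ℂ) * qContour ℏ t)))))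
        = fun t : ℝ => (1 / 4 : ℂ) *
            (Complex.exp (-Complex.I * qContour ℏ t * z) /
              (Complex.sinh ((Real.pi : ℂ) * qContour ℏ t) *
               Complex.sinh ((Real.pi : ℂ) * (ℏ : ℂ) * qContour ℏ t))) := by
      funext t
      rw [← Complex.two_sinh, ← Complex.two_sinh]
      field_simp
      ring
    rw [heq, integral_const_mul]
  have hqd : qdilog ℏ z = Complex.exp (-(1 / 4 : ℂ) * ∫ t : ℝ,
      Complex.exp (-Complex.I * qContour ℏ t * z) /
        (Complex.sinh ((Real.pi : ℂ) * qContour ℏ t) *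
         Complex.sinh ((Real.pi : ℂ) * (ℏ : ℂ) * qContour ℏ t) * qContour ℏ t)) := rfl
  rw [hJ, hql, hqd]
  push_cast
  set J := ∫ t : ℝ,
      Complex.exp (-Complex.I * qContour ℏ t * z) /
        (Complex.sinh ((Real.pi : ℂ) * qContour ℏ t) *
         Complex.sinh ((Real.pi : ℂ) * (ℏ : ℂ) * qContour ℏ t)) with hJdef
  set E := Complex.exp (-(1 / 4 : ℂ) * ∫ t : ℝ,
      Complex.exp (-Complex.I * qContour ℏ t * z) /
        (Complex.sinh ((Real.pi : ℂ) * qContour ℏ t) *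
         Complex.sinh ((Real.pi : ℂ) * (ℏ : ℂ) * qContour ℏ t) * qContour ℏ t)) with hEdef
  linear_combination ((Real.pi : ℂ) * (ℏ : ℂ) / 2 * J * E) * Complex.I_sq



end
end

section
/- Let ℏ > 0 and let z be a complex number with |Im z| < π(1+ℏ). Then the quantum dilogarithm satisfies conj(Φ^ℏ(z)) = Φ^ℏ(conj(z))^{−1}. In particular, |Φ^ℏ(x)| = 1 for every real x. -/
noncomputable section

open Complex

/-
Complex conjugation sends the contour point `t + iδ` to `-(-t + iδ)`. Substituting `t ↦ -t`
therefore turns the conjugate of the integrand at `z` into the integrand at `conj z`, up to the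
sign coming from the three odd factors `sinh(πw)`, `sinh(πℏw)` and `w` of the denominator. So
the conjugate of the exponent of `Φ^ℏ(z)` is minus the exponent of `Φ^ℏ(conj z)`.
-/

open MeasureTheory

def qdilogKernel (ℏ : ℝ) (z w : ℂ) : ℂ :=
  Complex.exp (-Complex.I * w * z) /
    (Complex.sinh ((Real.pi : ℂ) * w) * Complex.sinh ((Real.pi : ℂ) * (ℏ : ℂ) * w) * w)

lemma qdilog_eq_exp_integral (ℏ : ℝ) (z : ℂ) :
    qdilog ℏ z = Complex.exp (-(1 / 4 : ℂ) * ∫ t : ℝ, qdilogKernel ℏ z (qContour ℏ t)) :=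
  rfl

lemma conj_qContour (ℏ t : ℝ) : (starRingEnd ℂ) (qContour ℏ t) = -qContour ℏ (-t) := by
  simp only [qContour, map_add, map_mul, Complex.conj_ofReal, Complex.conj_I, Complex.ofReal_neg]
  ring

lemma conj_qdilogKernel (ℏ : ℝ) (z w : ℂ) :
    (starRingEnd ℂ) (qdilogKernel ℏ z w)
      = -qdilogKernel ℏ ((starRingEnd ℂ) z) (-(starRingEnd ℂ) w) := by
  have sinh_conj (c : ℝ) :
      (starRingEnd ℂ) (Complex.sinh (c * w)) = -Complex.sinh (c * -(starRingEnd ℂ) w) := by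
    rw [← Complex.sinh_conj, mul_neg, Complex.sinh_neg, neg_neg, map_mul, Complex.conj_ofReal]
  have sinh_conj' := sinh_conj (Real.pi * ℏ)
  push_cast at sinh_conj'
  simp only [qdilogKernel, map_div₀, map_mul, ← Complex.exp_conj, sinh_conj, sinh_conj', map_neg,
    Complex.conj_I]
  rw [show -(-Complex.I) * (starRingEnd ℂ) w = -Complex.I * -(starRingEnd ℂ) w by ring]
  ring

lemma conj_integral_qdilogKernel (ℏ : ℝ) (z : ℂ) :
    (starRingEnd ℂ) (∫ t : ℝ, qdilogKernel ℏ z (qContour ℏ t))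
      = -∫ t : ℝ, qdilogKernel ℏ ((starRingEnd ℂ) z) (qContour ℏ t) := by
  rw [← integral_conj, ← integral_neg,
    ← integral_neg_eq_self (fun t ↦ -qdilogKernel ℏ ((starRingEnd ℂ) z) (qContour ℏ t))]
  simp only [conj_qdilogKernel, conj_qContour, neg_neg]

lemma conj_qdilog (ℏ : ℝ) (z : ℂ) :
    (starRingEnd ℂ) (qdilog ℏ z) = (qdilog ℏ ((starRingEnd ℂ) z))⁻¹ := by
  have conj_quarter : (starRingEnd ℂ) (-(1 / 4 : ℂ)) = -(1 / 4 : ℂ) := by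
    simpa using Complex.conj_ofReal (-(1 / 4 : ℝ))
  rw [qdilog_eq_exp_integral, qdilog_eq_exp_integral, ← Complex.exp_conj, ← Complex.exp_neg,
    map_mul, conj_quarter, conj_integral_qdilogKernel]
  ring_nf

lemma Complex.norm_eq_one_of_conj_eq_inv {w : ℂ} (hw : w ≠ 0) (h : (starRingEnd ℂ) w = w⁻¹) :
    ‖w‖ = 1 := by
  have hnormSq : (Complex.normSq w : ℂ) = 1 := by
    rw [← Complex.mul_conj, h, mul_inv_cancel₀ hw]
  rw [← Real.sqrt_one, ← Complex.ofReal_eq_one.mp hnormSq, Complex.norm_def]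

theorem stmt16_general (ℏ : ℝ) :
    (∀ z : ℂ, |z.im| < Real.pi * (1 + ℏ) →
      (starRingEnd ℂ) (qdilog ℏ z) = (qdilog ℏ ((starRingEnd ℂ) z))⁻¹) ∧
    (∀ x : ℝ, ‖qdilog ℏ (x : ℂ)‖ = 1) := by
  refine ⟨fun z _ ↦ conj_qdilog ℏ z, fun x ↦ ?_⟩
  have conj_eq_inv := conj_qdilog ℏ x
  rw [Complex.conj_ofReal] at conj_eq_inv
  exact Complex.norm_eq_one_of_conj_eq_inv (Complex.exp_ne_zero _) conj_eq_inv

theorem stmt16 (ℏ : ℝ) (hℏ : 0 < ℏ) :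
    (∀ z : ℂ, |z.im| < Real.pi * (1 + ℏ) →
      (starRingEnd ℂ) (qdilog ℏ z) = (qdilog ℏ ((starRingEnd ℂ) z))⁻¹) ∧
    (∀ x : ℝ, ‖qdilog ℏ (x : ℂ)‖ = 1) :=
  stmt16_general ℏ


end
end

section
/- Let ℏ > 0 and let z be a complex number with |Im z| < π(1+ℏ). Then the quantum dilogarithm satisfies the self-duality Φ^ℏ(z) = Φ^{1/ℏ}(z/ℏ). -/
noncomputable section

open Complex

theorem stmt17 (ℏ : ℝ) (hℏ : 0 < ℏ) (z : ℂ) (hz : |z.im| < Real.pi * (1 + ℏ)) :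
    qdilog ℏ z = qdilog ℏ⁻¹ (z / (ℏ : ℂ)) := by
  have hℏ0 : (ℏ : ℂ) ≠ 0 := by exact_mod_cast hℏ.ne'
  have hmin : (min 1 ℏ : ℝ) = ℏ * min 1 ℏ⁻¹ := by
    rcases le_total ℏ 1 with h | h
    · rw [min_eq_right h, min_eq_left (by nlinarith [inv_pos.mpr hℏ, mul_inv_cancel₀ hℏ.ne']), mul_one]
    · rw [min_eq_left h, min_eq_right (by rw [inv_le_one_iff₀]; right; exact h),
        mul_inv_cancel₀ hℏ.ne']
  have hc : ∀ t : ℝ, qContour ℏ⁻¹ (ℏ * t) = (ℏ : ℂ) * qContour ℏ t := by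
    intro t
    simp only [qContour, inv_inv]
    rw [show ((min 1 ℏ / 2 : ℝ) : ℂ) = (ℏ : ℂ) * ((min 1 ℏ⁻¹ / 2 : ℝ) : ℂ) by
      push_cast [hmin]; ring]
    push_cast
    ring
  set g : ℝ → ℂ := fun t =>
      Complex.exp (-Complex.I * qContour ℏ t * z) /
        (Complex.sinh ((Real.pi : ℂ) * qContour ℏ t) *
         Complex.sinh ((Real.pi : ℂ) * (ℏ : ℂ) * qContour ℏ t) * qContour ℏ t) with hg
  set f : ℝ → ℂ := fun t =>
      Complex.exp (-Complex.I * qContour ℏ⁻¹ t * (z / (ℏ : ℂ))) /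
        (Complex.sinh ((Real.pi : ℂ) * qContour ℏ⁻¹ t) *
         Complex.sinh ((Real.pi : ℂ) * ((ℏ⁻¹ : ℝ) : ℂ) * qContour ℏ⁻¹ t) * qContour ℏ⁻¹ t)
    with hf
  have hpt : ∀ t : ℝ, f (ℏ * t) = (ℏ : ℂ)⁻¹ * g t := by
    intro t
    simp only [hf, hg, hc t]
    have e1 : -Complex.I * ((ℏ : ℂ) * qContour ℏ t) * (z / (ℏ : ℂ)) =
        -Complex.I * qContour ℏ t * z := by
      field_simp
    have e2 : (Real.pi : ℂ) * ((ℏ⁻¹ : ℝ) : ℂ) * ((ℏ : ℂ) * qContour ℏ t) =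
        (Real.pi : ℂ) * qContour ℏ t := by
      push_cast
      field_simp
    have e3 : (Real.pi : ℂ) * ((ℏ : ℂ) * qContour ℏ t) =
        (Real.pi : ℂ) * (ℏ : ℂ) * qContour ℏ t := by ring
    rw [e1, e2, e3]
    ring
  have hint : (∫ t : ℝ, f t) = ∫ t : ℝ, g t := by
    have h1 : (∫ t : ℝ, f (ℏ * t)) = |ℏ⁻¹| • ∫ t : ℝ, f t :=
      MeasureTheory.Measure.integral_comp_mul_left f ℏ
    have h2 : (∫ t : ℝ, f (ℏ * t)) = (ℏ : ℂ)⁻¹ * ∫ t : ℝ, g t := by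
      simp_rw [hpt]
      exact MeasureTheory.integral_const_mul _ _
    rw [h2] at h1
    have habs : |ℏ⁻¹| = ℏ⁻¹ := abs_of_pos (inv_pos.mpr hℏ)
    rw [habs, Complex.real_smul] at h1
    push_cast at h1
    have hinv : ((ℏ : ℂ))⁻¹ ≠ 0 := inv_ne_zero hℏ0
    exact (mul_left_cancel₀ hinv h1).symm
  unfold qdilog
  rw [← hf, ← hg, hint]



end
end
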